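/- arXiv:quant-ph/9806011 — 6 statements merged into one kernel-verified Lean document; each statement's English description precedes it below -/
import Mathlib

section
/- Let d₁, d₂ be positive integers and let M be a Hermitian matrix indexed by (Fin d₁ × Fin d₂). Suppose that for every unitary matrix U ∈ U(d₁, ℂ) and every unitary matrix V ∈ U(d₂, ℂ), every diagonal entry of the conjugated matrix ((U ⊗ₖ V)ᴴ) * M * (U ⊗ₖ V) vanishes, i.e. for all p : Fin d₁ × Fin d₂, (((U ⊗ₖ V)ᴴ) * M * (U ⊗ₖ V))_{p,p} = 0. Then M = 0. -/
/-! Every unit vector is a column of some unitary matrix, so the hypothesis says that the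
quadratic form of `M` vanishes at every product `x ⊗ y` of unit vectors. For fixed `y` this is
the quadratic form, in `x`, of the matrix `⟨y| M |y⟩` on the first factor, which therefore
vanishes by complex polarization; polarizing once more, in `y`, kills every block of `M`. -/

open Matrix Kronecker

namespace Matrix

section QuadraticForm

variable {n : Type*} [Fintype n]

theorem star_smul_dotProduct_mulVec_smul {α : Type*} [CommSemiring α] [StarRing α]
    (N : Matrix n n α) (c : α) (x : n → α) :
    star (c • x) ⬝ᵥ N *ᵥ (c • x) = star c * c * (star x ⬝ᵥ N *ᵥ x) := by
  rw [star_smul, mulVec_smul, smul_dotProduct, dotProduct_smul, smul_eq_mul, smul_eq_mul,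
    mul_assoc, mul_left_comm]

theorem conjTranspose_mul_mul_apply_self {m α : Type*} [CommSemiring α] [StarRing α]
    (A : Matrix n m α) (M : Matrix n n α) (p : m) :
    (Aᴴ * M * A) p p = star (Aᵀ p) ⬝ᵥ M *ᵥ Aᵀ p := by
  rw [Matrix.mul_assoc]
  simp [mul_apply, dotProduct, mulVec]

theorem eq_zero_of_forall_norm_eq_one_star_dotProduct_mulVec (N : Matrix n n ℂ)
    (h : ∀ x : EuclideanSpace ℂ n, ‖x‖ = 1 → star x.ofLp ⬝ᵥ N *ᵥ x.ofLp = 0) : N = 0 := by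
  have hall (x : EuclideanSpace ℂ n) : star x.ofLp ⬝ᵥ N *ᵥ x.ofLp = 0 := by
    obtain rfl | hx := eq_or_ne x 0
    · simp
    have hnorm : ‖x‖ ≠ 0 := norm_ne_zero_iff.mpr hx
    have hunit : ‖(‖x‖⁻¹ : ℂ) • x‖ = 1 := by
      rw [norm_smul, norm_inv, Complex.norm_real, norm_norm, inv_mul_cancel₀ hnorm]
    have hx_eq : x.ofLp = (‖x‖ : ℂ) • ((‖x‖⁻¹ : ℂ) • x).ofLp := by
      rw [WithLp.ofLp_smul, smul_smul, mul_inv_cancel₀ (by exact_mod_cast hnorm), one_smul]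
    rw [hx_eq, star_smul_dotProduct_mulVec_smul, h _ hunit, mul_zero]
  classical
  suffices toLpLin 2 2 N = 0 from (toLpLin 2 2).map_eq_zero_iff.mp this
  refine (inner_map_self_eq_zero _).mp fun x => inner_eq_zero_symm.mp ?_
  rw [EuclideanSpace.inner_eq_star_dotProduct, ofLp_toLpLin, dotProduct_comm]
  exact hall x

theorem exists_mem_unitaryGroup_col_eq {𝕜 : Type*} [RCLike 𝕜] [DecidableEq n] (j : n)
    (u : EuclideanSpace 𝕜 n) (hu : ‖u‖ = 1) :
    ∃ U ∈ unitaryGroup n 𝕜, ∀ i, U i j = u i := by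
  have horth : Orthonormal 𝕜 (({j} : Set n).domRestrict fun _ => u) := by
    simp [hu]
  obtain ⟨b, hb⟩ := horth.exists_orthonormalBasis_extension_of_card_eq (by simp)
  refine ⟨_, (EuclideanSpace.basisFun n 𝕜).toMatrix_orthonormalBasis_mem_unitary b, fun i => ?_⟩
  simp [Module.Basis.toMatrix_apply, hb j rfl]

end QuadraticForm

section PartialQuadForm

variable {ι κ α : Type*} [Fintype ι] [Fintype κ] [CommSemiring α] [StarRing α]

def partialQuadForm (M : Matrix (ι × κ) (ι × κ) α) (y : κ → α) : Matrix ι ι α :=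
  of fun a c => star y ⬝ᵥ (comp ι ι κ κ α).symm M a c *ᵥ y

theorem star_dotProduct_mulVec_prod (M : Matrix (ι × κ) (ι × κ) α) (x : ι → α) (y : κ → α) :
    star (fun q : ι × κ => x q.1 * y q.2) ⬝ᵥ M *ᵥ (fun q => x q.1 * y q.2) =
      star x ⬝ᵥ M.partialQuadForm y *ᵥ x := by
  simp only [partialQuadForm, dotProduct, mulVec, Pi.star_apply, star_mul', of_apply,
    comp_symm_apply, Fintype.sum_prod_type, Finset.mul_sum, Finset.sum_mul]
  refine Finset.sum_congr rfl fun a _ => ?_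
  rw [Finset.sum_comm]
  refine Finset.sum_congr rfl fun c _ => Finset.sum_congr rfl fun b _ =>
    Finset.sum_congr rfl fun e _ => by ring

end PartialQuadForm

end Matrix

theorem eq_zero_of_diag_vanishes_in_all_product_bases_general (d₁ d₂ : ℕ)
    (hd₁ : 0 < d₁) (hd₂ : 0 < d₂)
    (M : Matrix (Fin d₁ × Fin d₂) (Fin d₁ × Fin d₂) ℂ)
    (h : ∀ U : Matrix.unitaryGroup (Fin d₁) ℂ, ∀ V : Matrix.unitaryGroup (Fin d₂) ℂ,
      ∀ p : Fin d₁ × Fin d₂,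
        ((((U : Matrix (Fin d₁) (Fin d₁) ℂ) ⊗ₖ (V : Matrix (Fin d₂) (Fin d₂) ℂ))ᴴ * M *
          ((U : Matrix (Fin d₁) (Fin d₁) ℂ) ⊗ₖ (V : Matrix (Fin d₂) (Fin d₂) ℂ))) p p) = 0) :
    M = 0 := by
  have hunit (x : EuclideanSpace ℂ (Fin d₁)) (y : EuclideanSpace ℂ (Fin d₂)) (hx : ‖x‖ = 1)
      (hy : ‖y‖ = 1) : star x.ofLp ⬝ᵥ M.partialQuadForm y.ofLp *ᵥ x.ofLp = 0 := by
    obtain ⟨U, hU, hUx⟩ := exists_mem_unitaryGroup_col_eq ⟨0, hd₁⟩ x hx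
    obtain ⟨V, hV, hVy⟩ := exists_mem_unitaryGroup_col_eq ⟨0, hd₂⟩ y hy
    have hcol : (U ⊗ₖ V)ᵀ (⟨0, hd₁⟩, ⟨0, hd₂⟩) = fun q => x q.1 * y q.2 := by
      ext q; simp [hUx, hVy]
    rw [← star_dotProduct_mulVec_prod, ← hcol, ← conjTranspose_mul_mul_apply_self]
    exact h ⟨U, hU⟩ ⟨V, hV⟩ _
  have hpartial (y : EuclideanSpace ℂ (Fin d₂)) (hy : ‖y‖ = 1) : M.partialQuadForm y.ofLp = 0 :=
    eq_zero_of_forall_norm_eq_one_star_dotProduct_mulVec _ fun x hx => hunit x y hx hy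
  have hblock (a c : Fin d₁) : (comp _ _ _ _ ℂ).symm M a c = 0 :=
    eq_zero_of_forall_norm_eq_one_star_dotProduct_mulVec _ fun y hy =>
      congrFun₂ (hpartial y hy) a c
  ext ⟨a, b⟩ ⟨c, e⟩
  exact congrFun₂ (hblock a c) b e

/-- If a Hermitian matrix `M` on `ℂ^{d₁} ⊗ ℂ^{d₂}` has vanishing
diagonal in every simple-tensor basis (i.e. all diagonal entries of
`(U ⊗ₖ V)ᴴ * M * (U ⊗ₖ V)` vanish for all unitaries `U`, `V`), then `M = 0`. -/
theorem eq_zero_of_diag_vanishes_in_all_product_bases (d₁ d₂ : ℕ)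
    (hd₁ : 0 < d₁) (hd₂ : 0 < d₂)
    (M : Matrix (Fin d₁ × Fin d₂) (Fin d₁ × Fin d₂) ℂ) (hM : M.IsHermitian)
    (h : ∀ U : Matrix.unitaryGroup (Fin d₁) ℂ, ∀ V : Matrix.unitaryGroup (Fin d₂) ℂ,
      ∀ p : Fin d₁ × Fin d₂,
        ((((U : Matrix (Fin d₁) (Fin d₁) ℂ) ⊗ₖ (V : Matrix (Fin d₂) (Fin d₂) ℂ))ᴴ * M *
          ((U : Matrix (Fin d₁) (Fin d₁) ℂ) ⊗ₖ (V : Matrix (Fin d₂) (Fin d₂) ℂ))) p p) = 0) :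
    M = 0 :=
  eq_zero_of_diag_vanishes_in_all_product_bases_general d₁ d₂ hd₁ hd₂ M h
end

section
/- Let d₁, d₂ be positive integers and let M be a Hermitian matrix indexed by (Fin d₁ × Fin d₂). Suppose that for all vectors x : Fin d₁ → ℂ and y : Fin d₂ → ℂ the expectation value of M in the simple-tensor vector x ⊗ y vanishes: (star (x ⊗ y)) ⬝ᵥ (M *ᵥ (x ⊗ y)) = 0, where (x ⊗ y)(i,j) = x i · y j. Then M = 0. -/
/-!
Fix `y`. Summing out the second factor turns `M` into the matrix `⟨y| M |y⟩` on `ℂ^{d₁}`, whose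
quadratic form is `x ↦ ⟨x ⊗ y| M |x ⊗ y⟩ = 0`; over `ℂ` polarization forces a matrix with vanishing
quadratic form to be zero. So every entry `⟨y| M_{ac} |y⟩` vanishes, and by polarization again every
block `M_{ac}` is zero.
-/

open Matrix

namespace Matrix

theorem eq_zero_of_forall_star_dotProduct_mulVec_self_eq_zero {n : Type*} [Fintype n]
    {A : Matrix n n ℂ} (h : ∀ x : n → ℂ, star x ⬝ᵥ A *ᵥ x = 0) : A = 0 := by
  classical
  rw [← toEuclideanLin.map_eq_zero_iff, ← inner_map_self_eq_zero]
  intro x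
  have hx := congrArg star (h x.ofLp)
  rw [star_zero, ← star_dotProduct_star, star_star, dotProduct_comm] at hx
  rwa [EuclideanSpace.inner_eq_star_dotProduct]

variable {R m n : Type*} [Fintype n] [CommSemiring R] [StarRing R]

/-- The operator `(id ⊗ ⟨y|) M (id ⊗ |y⟩)` on the first tensor factor. -/
def partialExpectation (M : Matrix (m × n) (m × n) R) (y : n → R) : Matrix m m R :=
  of fun a c => star y ⬝ᵥ (comp m m n n R).symm M a c *ᵥ y

theorem star_dotProduct_partialExpectation_mulVec [Fintype m] (M : Matrix (m × n) (m × n) R)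
    (x : m → R) (y : n → R) :
    star x ⬝ᵥ M.partialExpectation y *ᵥ x =
      star (fun p : m × n => x p.1 * y p.2) ⬝ᵥ (M *ᵥ fun p : m × n => x p.1 * y p.2) := by
  simp only [partialExpectation, dotProduct, mulVec, of_apply, comp_symm_apply,
    Fintype.sum_prod_type, Finset.mul_sum, Finset.sum_mul, Pi.star_apply, star_mul']
  refine Finset.sum_congr rfl fun a _ => ?_
  rw [Finset.sum_comm]
  refine Finset.sum_congr rfl fun b _ => Finset.sum_congr rfl fun c _ =>
    Finset.sum_congr rfl fun d _ => ?_
  ring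

end Matrix

theorem eq_zero_of_product_expectations_vanish_general (d₁ d₂ : ℕ)
    (M : Matrix (Fin d₁ × Fin d₂) (Fin d₁ × Fin d₂) ℂ)
    (h : ∀ (x : Fin d₁ → ℂ) (y : Fin d₂ → ℂ),
      star (fun p : Fin d₁ × Fin d₂ => x p.1 * y p.2) ⬝ᵥ
        (M *ᵥ fun p : Fin d₁ × Fin d₂ => x p.1 * y p.2) = 0) :
    M = 0 := by
  have hpartial (y : Fin d₂ → ℂ) : M.partialExpectation y = 0 :=
    eq_zero_of_forall_star_dotProduct_mulVec_self_eq_zero fun x => by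
      rw [star_dotProduct_partialExpectation_mulVec, h]
  have hblocks : (comp _ _ _ _ ℂ).symm M = 0 := by
    ext1 a c
    exact eq_zero_of_forall_star_dotProduct_mulVec_self_eq_zero fun y =>
      congrFun (congrFun (hpartial y) a) c
  rw [Equiv.symm_apply_eq] at hblocks
  rw [hblocks]
  rfl

/-- If a Hermitian matrix `M` on `ℂ^{d₁} ⊗ ℂ^{d₂}` has vanishing
expectation value in every simple-tensor vector `x ⊗ y` (where
`(x ⊗ y)(i,j) = x i * y j`), then `M = 0`. -/
theorem eq_zero_of_product_expectations_vanish (d₁ d₂ : ℕ) (hd₁ : 0 < d₁) (hd₂ : 0 < d₂)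
    (M : Matrix (Fin d₁ × Fin d₂) (Fin d₁ × Fin d₂) ℂ) (hM : M.IsHermitian)
    (h : ∀ (x : Fin d₁ → ℂ) (y : Fin d₂ → ℂ),
      star (fun p : Fin d₁ × Fin d₂ => x p.1 * y p.2) ⬝ᵥ
        (M *ᵥ fun p : Fin d₁ × Fin d₂ => x p.1 * y p.2) = 0) :
    M = 0 :=
  eq_zero_of_product_expectations_vanish_general d₁ d₂ M h
end

section
/- Let ρ be a density matrix indexed by ((Fin 2) × (Fin 2)) (positive semidefinite with trace 1), representing a state of a 2 × 2 composite system. Define the matrix H by H_{(i,j),(k,l)} = ρ_{(i,j),(k,l)} if i ≠ k and j ≠ l, and H_{(i,j),(k,l)} = 0 otherwise. Then H is Hermitian, trace(H) = 0, and the operator norm of H is at most 1/2. -/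
open Matrix
open scoped ComplexOrder Matrix.Norms.L2Operator

/-!
`H` is supported on the graph of the involution `σ` flipping both bits, so `H = D * P_σ` with
`P_σ` a permutation matrix and `D` diagonal with entries `ρ p (σ p)`; hence
`‖H‖ ≤ maxₚ ‖ρ p (σ p)‖`. The `2 × 2` principal minors of `ρ` are nonnegative, so
`‖ρ p q‖² ≤ ρ p p * ρ q q` and by AM-GM `2 ‖ρ p q‖ ≤ ρ p p + ρ q q ≤ trace ρ = 1` for `p ≠ q`.
-/

namespace Matrix

variable {n 𝕜 : Type*} [RCLike 𝕜]

lemma PosSemidef.norm_sq_apply_le {A : Matrix n n 𝕜} (hA : A.PosSemidef) (i j : n) :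
    ‖A i j‖ ^ 2 ≤ RCLike.re (A i i) * RCLike.re (A j j) := by
  classical
  have hdet := (hA.submatrix ![i, j]).det_nonneg
  simp only [det_fin_two, submatrix_apply, cons_val_zero, cons_val_one,
    ← hA.1.apply j i, RCLike.star_def, RCLike.mul_conj] at hdet
  have hi := (RCLike.nonneg_iff.mp (hA.diag_nonneg (i := i))).2
  have hj := (RCLike.nonneg_iff.mp (hA.diag_nonneg (i := j))).2
  have hre := (RCLike.nonneg_iff.mp hdet).1
  simp only [map_sub, RCLike.mul_re, hi, hj, mul_zero, sub_zero] at hre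
  norm_cast at hre
  exact sub_nonneg.mp hre

lemma PosSemidef.two_mul_norm_apply_le {A : Matrix n n 𝕜} (hA : A.PosSemidef) (i j : n) :
    2 * ‖A i j‖ ≤ RCLike.re (A i i) + RCLike.re (A j j) := by
  have hi := (RCLike.nonneg_iff.mp (hA.diag_nonneg (i := i))).1
  have hj := (RCLike.nonneg_iff.mp (hA.diag_nonneg (i := j))).1
  nlinarith [hA.norm_sq_apply_le i j, sq_nonneg (RCLike.re (A i i) - RCLike.re (A j j)),
    norm_nonneg (A i j)]

lemma PosSemidef.two_mul_norm_apply_le_re_trace [Fintype n] {A : Matrix n n 𝕜}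
    (hA : A.PosSemidef) {i j : n} (hij : i ≠ j) : 2 * ‖A i j‖ ≤ RCLike.re A.trace := by
  classical
  calc 2 * ‖A i j‖ ≤ RCLike.re (A i i) + RCLike.re (A j j) := hA.two_mul_norm_apply_le i j
    _ = ∑ k ∈ {i, j}, RCLike.re (A k k) := by rw [Finset.sum_pair hij]
    _ ≤ ∑ k, RCLike.re (A k k) :=
      Finset.sum_le_univ_sum_of_nonneg fun k ↦ (RCLike.nonneg_iff.mp hA.diag_nonneg).1
    _ = RCLike.re A.trace := by simp [trace]

lemma eq_diagonal_mul_permMatrix [Fintype n] [DecidableEq n] {A : Matrix n n 𝕜}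
    {σ : Equiv.Perm n} (hA : ∀ i j, j ≠ σ i → A i j = 0) :
    A = diagonal (fun i ↦ A i (σ i)) * σ.permMatrix 𝕜 := by
  ext i j
  rw [diagonal_mul]
  by_cases h : j = σ i
  · simp [h]
  · simp [PEquiv.toMatrix_apply, Ne.symm h, hA i j h]

lemma l2_opNorm_le_of_apply_eq_zero_of_ne_perm [Fintype n] [DecidableEq n] {A : Matrix n n 𝕜}
    (σ : Equiv.Perm n) (hA : ∀ i j, j ≠ σ i → A i j = 0) :
    ‖A‖ ≤ ‖fun i ↦ A i (σ i)‖ :=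
  calc ‖A‖ = ‖diagonal (fun i ↦ A i (σ i)) * σ.permMatrix 𝕜‖ := by
        rw [← eq_diagonal_mul_permMatrix hA]
    _ ≤ ‖diagonal (fun i ↦ A i (σ i))‖ * ‖σ.permMatrix 𝕜‖ := l2_opNorm_mul _ _
    _ ≤ ‖fun i ↦ A i (σ i)‖ := by
        grw [l2_opNorm_diagonal, permMatrix_l2_opNorm_le, mul_one]

end Matrix

/-- For a density matrix `ρ` of a `2 × 2` composite system, the
component `H` which keeps exactly the entries of `ρ` whose row and column
indices differ in both tensor factors is Hermitian, traceless, and has operator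
norm at most `1/2`. -/
theorem offdiag_component_norm_le_half (ρ : Matrix (Fin 2 × Fin 2) (Fin 2 × Fin 2) ℂ)
    (hρ : ρ.PosSemidef) (hτ : ρ.trace = 1)
    (H : Matrix (Fin 2 × Fin 2) (Fin 2 × Fin 2) ℂ)
    (hH : H = Matrix.of fun p q : Fin 2 × Fin 2 =>
      if p.1 ≠ q.1 ∧ p.2 ≠ q.2 then ρ p q else 0) :
    H.IsHermitian ∧ H.trace = 0 ∧ ‖Matrix.toEuclideanCLM (𝕜 := ℂ) H‖ ≤ 1 / 2 := by
  let σ : Equiv.Perm (Fin 2 × Fin 2) := (Equiv.addRight 1).prodCongr (Equiv.addRight 1)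
  have hσ : ∀ p q : Fin 2 × Fin 2, (p.1 ≠ q.1 ∧ p.2 ≠ q.2) ↔ q = σ p := by decide
  have hσ_ne : ∀ p, p ≠ σ p := by decide
  subst hH
  refine ⟨?_, by simp [trace], ?_⟩
  · ext p q
    simp only [conjTranspose_apply, of_apply, ne_comm (a := q.1), ne_comm (a := q.2)]
    split_ifs
    · exact hρ.1.apply p q
    · exact star_zero _
  · rw [l2_opNorm_toEuclideanCLM]
    refine (l2_opNorm_le_of_apply_eq_zero_of_ne_perm σ fun p q hq ↦ ?_).trans ?_
    · simp only [of_apply, hσ, if_neg hq]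
    · refine (pi_norm_le_iff_of_nonneg (by norm_num)).mpr fun p ↦ ?_
      have := hρ.two_mul_norm_apply_le_re_trace (hσ_ne p)
      simp only [of_apply, hσ, if_pos, hτ, RCLike.one_re] at this ⊢
      linarith
end

section
/- Let d₁, d₂ be positive integers and let ρ be a density matrix indexed by (Fin d₁ × Fin d₂) (positive semidefinite with trace 1). Then ρ can be written as a pseudomixture: there exist real numbers a, b with a ≥ 0, b ≥ 0, a = 1 + b, and separable density matrices ρ⁺ and ρ⁻ (each a finite convex combination of orthogonal projections onto unit simple-tensor vectors) such that ρ = a • ρ⁺ − b • ρ⁻. -/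
open Matrix Finset
open scoped ComplexOrder

/-- A matrix on `ℂ^{d₁} ⊗ ℂ^{d₂}` is separable if it is a finite convex
combination `Σ_α p_α P_α` (with `p_α > 0`, `Σ_α p_α = 1`) of orthogonal
projections `P_α = w_α w_αᴴ` onto unit simple-tensor vectors
`w_α = x_α ⊗ y_α`, `w_α(i,j) = x_α i * y_α j`. -/
def IsSeparableState {d₁ d₂ : ℕ} (σ : Matrix (Fin d₁ × Fin d₂) (Fin d₁ × Fin d₂) ℂ) : Prop :=
  ∃ (m : ℕ) (p : Fin m → ℝ) (x : Fin m → Fin d₁ → ℂ) (y : Fin m → Fin d₂ → ℂ),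
    (∀ α, 0 < p α) ∧ (∑ α, p α = 1) ∧
    (∀ α, star (x α) ⬝ᵥ x α = 1) ∧ (∀ α, star (y α) ⬝ᵥ y α = 1) ∧
    σ = ∑ α, p α •
      Matrix.vecMulVec (fun q : Fin d₁ × Fin d₂ => x α q.1 * y α q.2)
        (star fun q : Fin d₁ × Fin d₂ => x α q.1 * y α q.2)


noncomputable section
namespace PM
open Complex

def ket {d : ℕ} (i : Fin d) : Fin d → ℂ := fun j => if j = i then 1 else 0

def fv {d : ℕ} (i k : Fin d) : Fin 3 → Fin d → ℂ
  | 0 => ket i + ket k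
  | 1 => ket i
  | 2 => ket k

def gv {d : ℕ} (i k : Fin d) : Fin 3 → Fin d → ℂ
  | 0 => ket i
  | 1 => ket k
  | 2 => ket i + Complex.I • ket k

def ca : Fin 3 → ℝ
  | 0 => 1 | 1 => -1 | 2 => -1
def cb : Fin 3 → ℝ
  | 0 => 1 | 1 => 1 | 2 => -1

def dl {d : ℕ} (a b : Fin d) : ℂ := if a = b then 1 else 0

lemma sumF {d : ℕ} (i k r w : Fin d) :
    ∑ s : Fin 3, (ca s : ℂ) * (fv i k s r * (starRingEnd ℂ) (fv i k s w)) =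
      dl r i * dl w k + dl r k * dl w i := by
  simp only [Fin.sum_univ_three, fv, ca, ket, dl, Pi.add_apply, Pi.smul_apply, _root_.map_add, _root_.map_mul,
    apply_ite (starRingEnd ℂ), _root_.map_one, _root_.map_zero, Complex.conj_I, smul_eq_mul]
  push_cast
  ring

lemma sumG {d : ℕ} (i k r w : Fin d) :
    ∑ s : Fin 3, (cb s : ℂ) * (gv i k s r * (starRingEnd ℂ) (gv i k s w)) =
      Complex.I * (dl r i * dl w k - dl r k * dl w i) := by
  simp only [Fin.sum_univ_three, gv, cb, ket, dl, Pi.add_apply, Pi.smul_apply, _root_.map_add, _root_.map_mul,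
    apply_ite (starRingEnd ℂ), _root_.map_one, _root_.map_zero, Complex.conj_I, smul_eq_mul]
  push_cast
  linear_combination ((if r = k then (1:ℂ) else 0) * (if w = k then (1:ℂ) else 0)) * Complex.I_sq

def XV {d : ℕ} (i k : Fin d) : Fin 4 → Fin 3 → Fin d → ℂ :=
  ![fv i k, gv i k, fv i k, gv i k]
def YV {d : ℕ} (j l : Fin d) : Fin 4 → Fin 3 → Fin d → ℂ :=
  ![fv j l, gv j l, gv j l, fv j l]
def co (zr zi : ℝ) : Fin 4 → Fin 3 → Fin 3 → ℝ :=
  ![fun s t => zr/4 * ca s * ca t,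
    fun s t => -(zr/4) * cb s * cb t,
    fun s t => zi/4 * ca s * cb t,
    fun s t => zi/4 * cb s * ca t]

lemma inner_lemma {d₁ d₂ : ℕ} (i k : Fin d₁) (j l : Fin d₂) (zr zi : ℝ)
    (r₁ w₁ : Fin d₁) (r₂ w₂ : Fin d₂) :
    ∑ u : Fin 4, ∑ s : Fin 3, ∑ t : Fin 3, (co zr zi u s t : ℂ) *
        ((XV i k u s r₁ * YV j l u t r₂) *
          (starRingEnd ℂ) (XV i k u s w₁ * YV j l u t w₂)) =
      (1/2) * (((zr:ℂ) + zi * Complex.I) * (dl r₁ i * dl r₂ j * dl w₁ k * dl w₂ l)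
        + ((zr:ℂ) - zi * Complex.I) * (dl r₁ k * dl r₂ l * dl w₁ i * dl w₂ j)) := by
  have key : ∑ u : Fin 4, ∑ s : Fin 3, ∑ t : Fin 3, (co zr zi u s t : ℂ) *
        ((XV i k u s r₁ * YV j l u t r₂) *
          (starRingEnd ℂ) (XV i k u s w₁ * YV j l u t w₂)) =
      ((zr:ℂ)/4) * ((∑ s : Fin 3, (ca s : ℂ) * (fv i k s r₁ * (starRingEnd ℂ) (fv i k s w₁))) *
                    (∑ t : Fin 3, (ca t : ℂ) * (fv j l t r₂ * (starRingEnd ℂ) (fv j l t w₂)))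
                  - (∑ s : Fin 3, (cb s : ℂ) * (gv i k s r₁ * (starRingEnd ℂ) (gv i k s w₁))) *
                    (∑ t : Fin 3, (cb t : ℂ) * (gv j l t r₂ * (starRingEnd ℂ) (gv j l t w₂))))
      + ((zi:ℂ)/4) * ((∑ s : Fin 3, (ca s : ℂ) * (fv i k s r₁ * (starRingEnd ℂ) (fv i k s w₁))) *
                    (∑ t : Fin 3, (cb t : ℂ) * (gv j l t r₂ * (starRingEnd ℂ) (gv j l t w₂)))
                  + (∑ s : Fin 3, (cb s : ℂ) * (gv i k s r₁ * (starRingEnd ℂ) (gv i k s w₁))) *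
                    (∑ t : Fin 3, (ca t : ℂ) * (fv j l t r₂ * (starRingEnd ℂ) (fv j l t w₂)))) := by
    simp only [Fin.sum_univ_four, Fin.sum_univ_three, XV, YV, co, ca, cb,
      Matrix.cons_val_zero, Matrix.cons_val_one, Matrix.head_cons,
      Matrix.cons_val_two, Matrix.tail_cons, Matrix.cons_val_three, _root_.map_mul]
    push_cast
    ring
  rw [key, sumF i k r₁ w₁, sumF j l r₂ w₂, sumG i k r₁ w₁, sumG j l r₂ w₂]
  linear_combination (-(zr:ℂ)/4 * (dl r₁ i * dl w₁ k - dl r₁ k * dl w₁ i) *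
    (dl r₂ j * dl w₂ l - dl r₂ l * dl w₂ j)) * Complex.I_sq


def tens {d₁ d₂ : ℕ} (x : Fin d₁ → ℂ) (y : Fin d₂ → ℂ) : Fin d₁ × Fin d₂ → ℂ :=
  fun p => x p.1 * y p.2

lemma conj_eq' (z : ℂ) : (starRingEnd ℂ) z = (z.re : ℂ) - z.im * Complex.I := by
  apply Complex.ext <;> simp

lemma decomp {d₁ d₂ : ℕ} (ρ : Matrix (Fin d₁ × Fin d₂) (Fin d₁ × Fin d₂) ℂ)
    (hherm : ρ.IsHermitian) :
    ρ = ∑ p : Fin d₁ × Fin d₂, ∑ q : Fin d₁ × Fin d₂, ∑ u : Fin 4, ∑ s : Fin 3, ∑ t : Fin 3,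
      ((co (ρ p q).re (ρ p q).im u s t : ℝ) : ℂ) •
        Matrix.vecMulVec (tens (XV p.1 q.1 u s) (YV p.2 q.2 u t))
          (star (tens (XV p.1 q.1 u s) (YV p.2 q.2 u t))) := by
  ext r w
  simp only [Matrix.sum_apply, Matrix.smul_apply, Matrix.vecMulVec_apply, Pi.star_apply,
    smul_eq_mul, tens, Complex.star_def]
  have step : ∀ p q : Fin d₁ × Fin d₂,
      ∑ u : Fin 4, ∑ s : Fin 3, ∑ t : Fin 3, ((co (ρ p q).re (ρ p q).im u s t : ℝ) : ℂ) *
        ((XV p.1 q.1 u s r.1 * YV p.2 q.2 u t r.2) *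
          (starRingEnd ℂ) (XV p.1 q.1 u s w.1 * YV p.2 q.2 u t w.2)) =
      (1/2) * (ρ p q * (dl r.1 p.1 * dl r.2 p.2 * dl w.1 q.1 * dl w.2 q.2)
        + (starRingEnd ℂ) (ρ p q) * (dl r.1 q.1 * dl r.2 q.2 * dl w.1 p.1 * dl w.2 p.2)) := by
    intro p q
    rw [inner_lemma p.1 q.1 p.2 q.2 (ρ p q).re (ρ p q).im r.1 w.1 r.2 w.2]
    rw [Complex.re_add_im, ← conj_eq']
  rw [Finset.sum_congr rfl fun p _ => Finset.sum_congr rfl fun q _ => step p q]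
  symm
  have h1 : ∑ p : Fin d₁ × Fin d₂, ∑ q : Fin d₁ × Fin d₂,
      ρ p q * (dl r.1 p.1 * dl r.2 p.2 * dl w.1 q.1 * dl w.2 q.2) = ρ r w := by
    simp [Fintype.sum_prod_type, dl, mul_ite, ite_mul, Finset.sum_ite_eq, Finset.sum_ite_eq']
  have h2 : ∑ p : Fin d₁ × Fin d₂, ∑ q : Fin d₁ × Fin d₂,
      (starRingEnd ℂ) (ρ p q) * (dl r.1 q.1 * dl r.2 q.2 * dl w.1 p.1 * dl w.2 p.2) =
      (starRingEnd ℂ) (ρ w r) := by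
    simp [Fintype.sum_prod_type, dl, mul_ite, ite_mul, Finset.sum_ite_eq, Finset.sum_ite_eq']
  have h3 : (starRingEnd ℂ) (ρ w r) = ρ r w := by
    have := congrFun (congrFun hherm.eq r) w
    simpa [Matrix.conjTranspose_apply] using this
  calc ∑ p : Fin d₁ × Fin d₂, ∑ q : Fin d₁ × Fin d₂,
      (1/2) * (ρ p q * (dl r.1 p.1 * dl r.2 p.2 * dl w.1 q.1 * dl w.2 q.2)
        + (starRingEnd ℂ) (ρ p q) * (dl r.1 q.1 * dl r.2 q.2 * dl w.1 p.1 * dl w.2 p.2))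
      = (1/2) * ((∑ p : Fin d₁ × Fin d₂, ∑ q : Fin d₁ × Fin d₂,
          ρ p q * (dl r.1 p.1 * dl r.2 p.2 * dl w.1 q.1 * dl w.2 q.2))
        + ∑ p : Fin d₁ × Fin d₂, ∑ q : Fin d₁ × Fin d₂,
          (starRingEnd ℂ) (ρ p q) * (dl r.1 q.1 * dl r.2 q.2 * dl w.1 p.1 * dl w.2 p.2)) := by
        simp only [mul_add, Finset.sum_add_distrib, ← Finset.mul_sum]
    _ = ρ r w := by rw [h1, h2, h3]; ring
  

def nsq {d : ℕ} (x : Fin d → ℂ) : ℝ := ∑ i, Complex.normSq (x i)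

lemma nsq_pos {d : ℕ} {x : Fin d → ℂ} (h : ∃ i, x i ≠ 0) : 0 < nsq x := by
  obtain ⟨i, hi⟩ := h
  exact Finset.sum_pos' (fun j _ => Complex.normSq_nonneg _)
    ⟨i, Finset.mem_univ i, Complex.normSq_pos.2 hi⟩

def nv {d : ℕ} (x : Fin d → ℂ) : Fin d → ℂ := fun i => ((Real.sqrt (nsq x) : ℝ) : ℂ)⁻¹ * x i

lemma conj_sum {d : ℕ} (x : Fin d → ℂ) :
    ∑ i, (starRingEnd ℂ) (x i) * x i = ((nsq x : ℝ) : ℂ) := by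
  simp [nsq, Complex.normSq_eq_conj_mul_self]

lemma sqrt_mul_self' {s : ℝ} (h : 0 < s) :
    ((Real.sqrt s : ℝ) : ℂ) * ((Real.sqrt s : ℝ) : ℂ) = (s : ℂ) := by
  rw [← Complex.ofReal_mul, Real.mul_self_sqrt h.le]

lemma nv_unit {d : ℕ} {x : Fin d → ℂ} (h : 0 < nsq x) : star (nv x) ⬝ᵥ nv x = 1 := by
  have hs : ((Real.sqrt (nsq x) : ℝ) : ℂ) ≠ 0 := by
    simp only [ne_eq, Complex.ofReal_eq_zero]
    positivity
  have : star (nv x) ⬝ᵥ nv x =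
      (((Real.sqrt (nsq x) : ℝ) : ℂ) * ((Real.sqrt (nsq x) : ℝ) : ℂ))⁻¹ *
        ∑ i, (starRingEnd ℂ) (x i) * x i := by
    simp only [dotProduct, Pi.star_apply, nv, Complex.star_def, _root_.map_mul, map_inv₀,
      Complex.conj_ofReal, Finset.mul_sum, mul_inv]
    exact Finset.sum_congr rfl fun i _ => by ring
  rw [this, conj_sum, sqrt_mul_self' h]
  rw [inv_mul_cancel₀]
  simp only [ne_eq, Complex.ofReal_eq_zero]
  exact h.ne'

lemma inv_nrm_sq {s : ℝ} (h : 0 < s) :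
    ((Real.sqrt s : ℝ) : ℂ)⁻¹ * ((Real.sqrt s : ℝ) : ℂ)⁻¹ = ((s⁻¹ : ℝ) : ℂ) := by
  rw [← mul_inv, sqrt_mul_self' h, Complex.ofReal_inv]

lemma vmv_nv {d₁ d₂ : ℕ} (x : Fin d₁ → ℂ) (y : Fin d₂ → ℂ) (hx : 0 < nsq x) (hy : 0 < nsq y) :
    Matrix.vecMulVec (tens (nv x) (nv y)) (star (tens (nv x) (nv y))) =
      ((((nsq x)⁻¹ * (nsq y)⁻¹ : ℝ)) : ℂ) •
        Matrix.vecMulVec (tens x y) (star (tens x y)) := by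
  ext p q
  simp only [Matrix.vecMulVec_apply, Matrix.smul_apply, Pi.star_apply, tens, nv,
    Complex.star_def, _root_.map_mul, map_inv₀, Complex.conj_ofReal, smul_eq_mul]
  calc ((Real.sqrt (nsq x) : ℝ) : ℂ)⁻¹ * x p.1 * (((Real.sqrt (nsq y) : ℝ) : ℂ)⁻¹ * y p.2) *
        (((Real.sqrt (nsq x) : ℝ) : ℂ)⁻¹ * (starRingEnd ℂ) (x q.1) *
          (((Real.sqrt (nsq y) : ℝ) : ℂ)⁻¹ * (starRingEnd ℂ) (y q.2)))
      = (((Real.sqrt (nsq x) : ℝ) : ℂ)⁻¹ * ((Real.sqrt (nsq x) : ℝ) : ℂ)⁻¹) *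
        ((((Real.sqrt (nsq y) : ℝ) : ℂ)⁻¹ * ((Real.sqrt (nsq y) : ℝ) : ℂ)⁻¹)) *
        (x p.1 * y p.2 * ((starRingEnd ℂ) (x q.1) * (starRingEnd ℂ) (y q.2))) := by ring
    _ = _ := by rw [inv_nrm_sq hx, inv_nrm_sq hy]; push_cast; ring

lemma trace_term {d₁ d₂ : ℕ} (x : Fin d₁ → ℂ) (y : Fin d₂ → ℂ) :
    (Matrix.vecMulVec (tens x y) (star (tens x y))).trace = ((nsq x * nsq y : ℝ) : ℂ) := by
  simp only [Matrix.trace, Matrix.diag, Matrix.vecMulVec_apply, Pi.star_apply, tens,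
    Complex.star_def, Complex.mul_conj]
  rw [Fintype.sum_prod_type]
  push_cast [Complex.normSq_mul]
  rw [← Finset.sum_mul_sum]
  simp [nsq, Finset.sum_mul]


lemma rsmul {d₁ d₂ : ℕ} (r : ℝ) (M : Matrix (Fin d₁ × Fin d₂) (Fin d₁ × Fin d₂) ℂ) :
    r • M = ((r : ℝ) : ℂ) • M := by
  ext p q
  simp [Matrix.smul_apply, Complex.real_smul]

lemma step2 {d₁ d₂ : ℕ} {ι : Type} [Fintype ι] [Nonempty ι]
    (c : ι → ℝ) (X : ι → Fin d₁ → ℂ) (Y : ι → Fin d₂ → ℂ)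
    (hX : ∀ α, ∃ i, X α i ≠ 0) (hY : ∀ α, ∃ j, Y α j ≠ 0)
    (ρ : Matrix (Fin d₁ × Fin d₂) (Fin d₁ × Fin d₂) ℂ)
    (hd : ρ = ∑ α, (c α : ℂ) •
      Matrix.vecMulVec (tens (X α) (Y α)) (star (tens (X α) (Y α))))
    (hτ : ρ.trace = 1) :
    ∃ (a b : ℝ) (ρp ρm : Matrix (Fin d₁ × Fin d₂) (Fin d₁ × Fin d₂) ℂ),
      0 ≤ a ∧ 0 ≤ b ∧ a = 1 + b ∧ IsSeparableState ρp ∧ IsSeparableState ρm ∧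
      ρ = a • ρp - b • ρm := by
  classical
  have hx : ∀ α, 0 < nsq (X α) := fun α => nsq_pos (hX α)
  have hy : ∀ α, 0 < nsq (Y α) := fun α => nsq_pos (hY α)
  set c' : ι → ℝ := fun α => c α * (nsq (X α) * nsq (Y α)) with hc'
  set P : ι → Matrix (Fin d₁ × Fin d₂) (Fin d₁ × Fin d₂) ℂ :=
    fun α => Matrix.vecMulVec (tens (nv (X α)) (nv (Y α)))
      (star (tens (nv (X α)) (nv (Y α)))) with hPdef
  have hsum : ∑ α, c' α = 1 := by
    have h1 : ρ.trace = ∑ α, (c' α : ℂ) := by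
      rw [hd, Matrix.trace_sum]
      refine Finset.sum_congr rfl fun α _ => ?_
      rw [Matrix.trace_smul, trace_term]
      simp only [smul_eq_mul, hc']
      push_cast
      ring
    rw [hτ] at h1
    have h2 : ((∑ α, c' α : ℝ) : ℂ) = ((1 : ℝ) : ℂ) := by push_cast; rw [← h1]
    exact_mod_cast h2
  have hPs : ∀ α, (c' α : ℂ) • P α = (c α : ℂ) •
      Matrix.vecMulVec (tens (X α) (Y α)) (star (tens (X α) (Y α))) := by
    intro α
    simp only [hPdef]
    rw [vmv_nv _ _ (hx α) (hy α), smul_smul]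
    congr 1
    have h1 : ((nsq (X α) : ℝ) : ℂ) ≠ 0 := by exact_mod_cast (hx α).ne'
    have h2 : ((nsq (Y α) : ℝ) : ℂ) ≠ 0 := by exact_mod_cast (hy α).ne'
    simp only [hc']
    push_cast
    field_simp
  have hρ' : ρ = ∑ α, (c' α : ℂ) • P α := by
    rw [hd]
    exact (Finset.sum_congr rfl fun α _ => hPs α).symm
  set t : ℝ := ∑ α, |c' α| with htdef
  have ht : 1 ≤ t := by
    calc (1:ℝ) = |∑ α, c' α| := by rw [hsum]; norm_num
    _ ≤ t := Finset.abs_sum_le_sum_abs _ _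
  set n : ℝ := (Fintype.card ι : ℝ) with hndef
  have hn : 0 < n := by
    rw [hndef]
    exact_mod_cast Fintype.card_pos
  set a : ℝ := (t+1)/2 + n/2 with hadef
  set b : ℝ := (t-1)/2 + n/2 with hbdef
  have hb : 0 < b := by rw [hbdef]; nlinarith
  have ha : 0 < a := by rw [hadef]; nlinarith
  set pp : ι → ℝ := fun α => ((|c' α| + c' α)/2 + 1/2)/a with hppdef
  set pm : ι → ℝ := fun α => ((|c' α| - c' α)/2 + 1/2)/b with hpmdef
  have hppos : ∀ α, 0 < pp α := by
    intro α
    apply div_pos _ ha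
    have := neg_abs_le (c' α)
    nlinarith
  have hpmos : ∀ α, 0 < pm α := by
    intro α
    apply div_pos _ hb
    have := le_abs_self (c' α)
    nlinarith
  have hpps : ∑ α, pp α = 1 := by
    rw [hppdef]
    rw [← Finset.sum_div]
    rw [div_eq_one_iff_eq ha.ne']
    rw [Finset.sum_add_distrib, Finset.sum_const, Finset.card_univ, nsmul_eq_mul]
    simp only [add_div, Finset.sum_add_distrib, ← Finset.sum_div]
    rw [hsum, ← htdef, hadef, hndef]
    ring
  have hpms : ∑ α, pm α = 1 := by
    rw [hpmdef]
    rw [← Finset.sum_div]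
    rw [div_eq_one_iff_eq hb.ne']
    rw [Finset.sum_add_distrib, Finset.sum_const, Finset.card_univ, nsmul_eq_mul]
    simp only [sub_div, add_div, Finset.sum_sub_distrib, Finset.sum_add_distrib, ← Finset.sum_div]
    rw [hsum, ← htdef, hbdef, hndef]
    ring
  have hsep : ∀ (p : ι → ℝ), (∀ α, 0 < p α) → (∑ α, p α = 1) →
      IsSeparableState (∑ α, p α • P α) := by
    intro p hpos hps
    set e := (Fintype.equivFin ι).symm with hedef
    refine ⟨Fintype.card ι, fun β => p (e β), fun β => nv (X (e β)), fun β => nv (Y (e β)),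
      fun β => hpos _, ?_, fun β => nv_unit (hx _), fun β => nv_unit (hy _), ?_⟩
    · rw [Equiv.sum_comp e p, hps]
    · exact (Equiv.sum_comp e (fun α => p α • P α)).symm
  refine ⟨a, b, ∑ α, pp α • P α, ∑ α, pm α • P α, ha.le, hb.le, by rw [hadef, hbdef]; ring,
    hsep pp hppos hpps, hsep pm hpmos hpms, ?_⟩
  rw [Finset.smul_sum, Finset.smul_sum, ← Finset.sum_sub_distrib, hρ']
  refine Finset.sum_congr rfl fun α _ => ?_
  rw [smul_smul, smul_smul]
  have h1 : a * pp α = (|c' α| + c' α)/2 + 1/2 := by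
    rw [hppdef, mul_comm, div_mul_cancel₀ _ ha.ne']
  have h2 : b * pm α = (|c' α| - c' α)/2 + 1/2 := by
    rw [hpmdef, mul_comm, div_mul_cancel₀ _ hb.ne']
  rw [h1, h2, rsmul _ (P α), rsmul _ (P α), ← sub_smul]
  congr 1
  push_cast
  ring


lemma fv_ne {d : ℕ} (i k : Fin d) (s : Fin 3) : ∃ j, fv i k s j ≠ 0 := by
  fin_cases s
  · refine ⟨i, ?_⟩
    simp only [fv, ket, Pi.add_apply, if_pos rfl]
    split_ifs <;> norm_num
  · exact ⟨i, by simp [fv, ket]⟩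
  · exact ⟨k, by simp [fv, ket]⟩

lemma gv_ne {d : ℕ} (i k : Fin d) (s : Fin 3) : ∃ j, gv i k s j ≠ 0 := by
  fin_cases s
  · exact ⟨i, by simp [gv, ket]⟩
  · exact ⟨k, by simp [gv, ket]⟩
  · refine ⟨i, ?_⟩
    simp only [gv, ket, Pi.add_apply, Pi.smul_apply, if_pos rfl, smul_eq_mul]
    split_ifs <;> simp [Complex.ext_iff]

lemma xv_ne {d : ℕ} (i k : Fin d) (u : Fin 4) (s : Fin 3) : ∃ j, XV i k u s j ≠ 0 := by
  fin_cases u <;>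
    simp only [XV, Matrix.cons_val_zero, Matrix.cons_val_one, Matrix.head_cons,
      Matrix.cons_val_two, Matrix.tail_cons, Matrix.cons_val_three] <;>
    first | exact fv_ne i k s | exact gv_ne i k s

lemma yv_ne {d : ℕ} (j l : Fin d) (u : Fin 4) (t : Fin 3) : ∃ i, YV j l u t i ≠ 0 := by
  fin_cases u <;>
    simp only [YV, Matrix.cons_val_zero, Matrix.cons_val_one, Matrix.head_cons,
      Matrix.cons_val_two, Matrix.tail_cons, Matrix.cons_val_three] <;>
    first | exact fv_ne j l t | exact gv_ne j l t

end PM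


/-- Every density matrix `ρ` on `ℂ^{d₁} ⊗ ℂ^{d₂}` is a
pseudomixture: `ρ = a • ρ⁺ - b • ρ⁻` with `a, b ≥ 0`, `a = 1 + b`, and
`ρ⁺`, `ρ⁻` separable density matrices. -/
theorem density_matrix_is_pseudomixture (d₁ d₂ : ℕ) (hd₁ : 0 < d₁) (hd₂ : 0 < d₂)
    (ρ : Matrix (Fin d₁ × Fin d₂) (Fin d₁ × Fin d₂) ℂ)
    (hρ : ρ.PosSemidef) (hτ : ρ.trace = 1) :
    ∃ (a b : ℝ) (ρp ρm : Matrix (Fin d₁ × Fin d₂) (Fin d₁ × Fin d₂) ℂ),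
      0 ≤ a ∧ 0 ≤ b ∧ a = 1 + b ∧ IsSeparableState ρp ∧ IsSeparableState ρm ∧
      ρ = a • ρp - b • ρm := by
  haveI : NeZero d₁ := ⟨hd₁.ne'⟩
  haveI : NeZero d₂ := ⟨hd₂.ne'⟩
  set C : ((Fin d₁ × Fin d₂) × (Fin d₁ × Fin d₂) × Fin 4 × Fin 3 × Fin 3) → ℝ := fun α => PM.co (ρ α.1 α.2.1).re (ρ α.1 α.2.1).im α.2.2.1 α.2.2.2.1 α.2.2.2.2
    with hC
  set Xf : ((Fin d₁ × Fin d₂) × (Fin d₁ × Fin d₂) × Fin 4 × Fin 3 × Fin 3) → Fin d₁ → ℂ := fun α => PM.XV α.1.1 α.2.1.1 α.2.2.1 α.2.2.2.1 with hXf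
  set Yf : ((Fin d₁ × Fin d₂) × (Fin d₁ × Fin d₂) × Fin 4 × Fin 3 × Fin 3) → Fin d₂ → ℂ := fun α => PM.YV α.1.2 α.2.1.2 α.2.2.1 α.2.2.2.2 with hYf
  have hd : ρ = ∑ α : (Fin d₁ × Fin d₂) × (Fin d₁ × Fin d₂) × Fin 4 × Fin 3 × Fin 3, (C α : ℂ) •
      Matrix.vecMulVec (PM.tens (Xf α) (Yf α)) (star (PM.tens (Xf α) (Yf α))) := by
    conv_lhs => rw [PM.decomp ρ hρ.1]
    simp only [hC, hXf, hYf, Fintype.sum_prod_type]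
  exact PM.step2 C Xf Yf (fun α => PM.xv_ne _ _ _ _) (fun α => PM.yv_ne _ _ _ _) ρ hd hτ
end
end

section
/- Let d₁, d₂ be positive integers and let ρ be a density matrix indexed by (Fin d₁ × Fin d₂) (positive semidefinite with trace 1). Then there exist a finite index set, unit vectors x_α : Fin d₁ → ℂ and y_α : Fin d₂ → ℂ, and real coefficients c_α with Σ_α c_α = 1, such that ρ = Σ_α c_α • (w_α w_αᴴ), where w_α = x_α ⊗ y_α is the (unit norm) simple tensor with entries w_α(i,j) = x_α i · y_α j. That is, every density matrix is a real affine combination of projections onto unit simple-tensor (product) vectors. -/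
/-!
Polarization writes every `a bᴴ` as a complex combination of four matrices `v vᴴ`, and these
are multiples of projections onto unit vectors, so such projections span all matrices over `ℂ`.
Kronecker products of spanning families span the matrices on the product, and
`x xᴴ ⊗ₖ y yᴴ` is the projection onto `x ⊗ y`. A Hermitian matrix written as a complex
combination of Hermitian ones equals its Hermitian part `(ρ + ρᴴ) / 2`, i.e. the combination
with the real parts of the coefficients; taking traces shows that these sum to `tr ρ = 1`.
-/

open Matrix Finset
open scoped ComplexOrder Kronecker
open Submodule

theorem vecMulVec_star_polarization {n : Type*} (a b : n → ℂ) :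
    (4 : ℂ) • vecMulVec a (star b) =
      vecMulVec (a + b) (star (a + b)) - vecMulVec (a - b) (star (a - b)) +
        Complex.I • (vecMulVec (a + Complex.I • b) (star (a + Complex.I • b)) -
          vecMulVec (a - Complex.I • b) (star (a - Complex.I • b))) := by
  ext i j
  simp only [Matrix.smul_apply, Matrix.add_apply, Matrix.sub_apply, vecMulVec_apply,
    Pi.add_apply, Pi.sub_apply, Pi.smul_apply, Pi.star_apply, star_add, star_sub, star_smul,
    RCLike.star_def, Complex.conj_I, smul_eq_mul]
  ring_nf
  rw [Complex.I_sq]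
  ring

def unitProjections (n : Type*) [Fintype n] : Set (Matrix n n ℂ) :=
  {P | ∃ v : n → ℂ, star v ⬝ᵥ v = 1 ∧ vecMulVec v (star v) = P}

section
variable {n : Type*} [Fintype n]

theorem vecMulVec_star_mem_span_unitProjections (v : n → ℂ) :
    vecMulVec v (star v) ∈ span ℂ (unitProjections n) := by
  rcases eq_or_ne v 0 with rfl | hv
  · simp
  obtain ⟨hre, him⟩ := Complex.nonneg_iff.1 (dotProduct_star_self_nonneg v)
  have hr : 0 < (star v ⬝ᵥ v).re :=
    hre.lt_of_ne fun h => hv (dotProduct_star_self_eq_zero.1 (Complex.ext h.symm him.symm))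
  set s : ℂ := (Real.sqrt (star v ⬝ᵥ v).re : ℂ)
  have hs_star : star s = s := Complex.conj_ofReal _
  have hs : s * s = star v ⬝ᵥ v := by
    rw [← Complex.ofReal_mul, Real.mul_self_sqrt hr.le]
    exact Complex.ext rfl him
  have hs0 : s ≠ 0 := Complex.ofReal_ne_zero.2 (Real.sqrt_pos.2 hr).ne'
  have hunit : star (s⁻¹ • v) ⬝ᵥ (s⁻¹ • v) = 1 := by
    simp only [star_smul, smul_dotProduct, dotProduct_smul, smul_eq_mul, star_inv₀, hs_star,
      ← hs]
    field_simp
  have hproj : vecMulVec v (star v) = (s * s) • vecMulVec (s⁻¹ • v) (star (s⁻¹ • v)) := by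
    rw [star_smul, smul_vecMulVec, vecMulVec_smul, smul_smul, smul_smul, star_inv₀, hs_star,
      mul_inv_cancel_right₀ hs0, mul_inv_cancel₀ hs0, one_smul]
  rw [hproj]
  exact smul_mem _ _ (subset_span ⟨_, hunit, rfl⟩)

theorem vecMulVec_mem_span_unitProjections (a b : n → ℂ) :
    vecMulVec a b ∈ span ℂ (unitProjections n) := by
  have h4 : vecMulVec a (star (star b)) ∈ span ℂ (unitProjections n) := by
    rw [← (smul_mem_iff _ (four_ne_zero' ℂ)), vecMulVec_star_polarization]
    exact add_mem (sub_mem (vecMulVec_star_mem_span_unitProjections _)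
      (vecMulVec_star_mem_span_unitProjections _)) (smul_mem _ _ (sub_mem
        (vecMulVec_star_mem_span_unitProjections _) (vecMulVec_star_mem_span_unitProjections _)))
  rwa [star_star] at h4

theorem span_unitProjections_eq_top [DecidableEq n] : span ℂ (unitProjections n) = ⊤ := by
  refine eq_top_iff'.2 fun M => ?_
  rw [matrix_eq_sum_single M]
  refine sum_mem fun i _ => sum_mem fun j _ => ?_
  rw [← mul_one (M i j), ← smul_eq_mul, ← smul_single, single_eq_single_vecMulVec_single]
  exact smul_mem _ _ (vecMulVec_mem_span_unitProjections _ _)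

end

section
variable {R l m n p : Type*} [CommSemiring R]

theorem kronecker_mem_span_image2 {s : Set (Matrix l m R)} {t : Set (Matrix n p R)}
    {A : Matrix l m R} {B : Matrix n p R} (hA : A ∈ span R s) (hB : B ∈ span R t) :
    A ⊗ₖ B ∈ span R (Set.image2 (· ⊗ₖ ·) s t) :=
  map₂_span_span R kroneckerBilinear s t ▸ apply_mem_map₂ kroneckerBilinear hA hB

theorem span_image2_kronecker_eq_top [Fintype l] [Fintype m] [Fintype n] [Fintype p]
    [DecidableEq l] [DecidableEq m] [DecidableEq n] [DecidableEq p]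
    {s : Set (Matrix l m R)} {t : Set (Matrix n p R)} (hs : span R s = ⊤) (ht : span R t = ⊤) :
    span R (Set.image2 (· ⊗ₖ ·) s t) = ⊤ := by
  refine eq_top_iff'.2 fun M => ?_
  rw [matrix_eq_sum_single M]
  refine sum_mem fun i _ => sum_mem fun j _ => ?_
  rw [← mul_one (M i j), ← smul_eq_mul, ← smul_single, ← mul_one (1 : R),
    ← single_kronecker_single]
  exact smul_mem _ _ (kronecker_mem_span_image2 (hs ▸ mem_top) (ht ▸ mem_top))

end

theorem mem_span_real_of_isSelfAdjoint {A : Type*} [AddCommGroup A] [Module ℂ A] [Module ℝ A]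
    [IsScalarTower ℝ ℂ A] [StarAddMonoid A] [StarModule ℂ A] {s : Set A}
    (hs : ∀ a ∈ s, IsSelfAdjoint a) {x : A} (hx : IsSelfAdjoint x) (hxs : x ∈ span ℂ s) :
    x ∈ span ℝ s := by
  obtain ⟨m, c, g, rfl⟩ := mem_span_set'.1 hxs
  have hstar : star (∑ i, c i • (g i : A)) = ∑ i, star (c i) • (g i : A) := by
    simp only [star_sum, star_smul, (hs _ (g _).2).star_eq]
  have hre : (2 : ℂ) • ∑ i, c i • (g i : A) = (2 : ℂ) • ∑ i, (c i).re • (g i : A) := by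
    calc (2 : ℂ) • ∑ i, c i • (g i : A)
        = ∑ i, c i • (g i : A) + star (∑ i, c i • (g i : A)) := by rw [hx.star_eq, two_smul]
      _ = (2 : ℂ) • ∑ i, (c i).re • (g i : A) := by
          rw [hstar, ← sum_add_distrib, smul_sum]
          refine sum_congr rfl fun i _ => ?_
          rw [← add_smul, ← algebraMap_smul ℂ (c i).re, smul_smul, Complex.star_def,
            Complex.add_conj, Complex.coe_algebraMap, Complex.ofReal_mul, Complex.ofReal_ofNat]
  rw [smul_right_injective A two_ne_zero hre]
  exact sum_mem fun i _ => smul_mem _ _ (subset_span (g i).2)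

def productProjections (m n : Type*) [Fintype m] [Fintype n] :
    Set (Matrix (m × n) (m × n) ℂ) :=
  {P | ∃ (x : m → ℂ) (y : n → ℂ), star x ⬝ᵥ x = 1 ∧ star y ⬝ᵥ y = 1 ∧
    vecMulVec (fun q : m × n => x q.1 * y q.2) (star fun q : m × n => x q.1 * y q.2) = P}

theorem kronecker_vecMulVec_star {R m n : Type*} [CommSemiring R] [StarRing R]
    (x : m → R) (y : n → R) :
    vecMulVec x (star x) ⊗ₖ vecMulVec y (star y) =
      vecMulVec (fun q : m × n => x q.1 * y q.2) (star fun q : m × n => x q.1 * y q.2) := by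
  ext ⟨i, k⟩ ⟨j, l⟩
  simp only [kronecker_apply, vecMulVec_apply, Pi.star_apply, star_mul']
  ring

section
variable {m n : Type*} [Fintype m] [Fintype n]

theorem span_productProjections_eq_top [DecidableEq m] [DecidableEq n] :
    span ℂ (productProjections m n) = ⊤ := by
  rw [eq_top_iff, ← span_image2_kronecker_eq_top span_unitProjections_eq_top
    span_unitProjections_eq_top]
  refine span_mono ?_
  rintro _ ⟨_, ⟨x, hx, rfl⟩, _, ⟨y, hy, rfl⟩, rfl⟩
  exact ⟨x, y, hx, hy, (kronecker_vecMulVec_star x y).symm⟩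

theorem isSelfAdjoint_of_mem_productProjections {P : Matrix (m × n) (m × n) ℂ}
    (hP : P ∈ productProjections m n) : IsSelfAdjoint P := by
  obtain ⟨x, y, -, -, rfl⟩ := hP
  exact (posSemidef_vecMulVec_self_star _).isHermitian

theorem trace_of_mem_productProjections {P : Matrix (m × n) (m × n) ℂ}
    (hP : P ∈ productProjections m n) : P.trace = 1 := by
  obtain ⟨x, y, hx, hy, rfl⟩ := hP
  rw [← kronecker_vecMulVec_star, trace_kronecker, trace_vecMulVec, trace_vecMulVec,
    dotProduct_comm, hx, dotProduct_comm, hy, one_mul]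

end

theorem density_matrix_affine_combination_of_product_projections_general
    (d₁ d₂ : ℕ)
    (ρ : Matrix (Fin d₁ × Fin d₂) (Fin d₁ × Fin d₂) ℂ)
    (hρ : ρ.PosSemidef) (hτ : ρ.trace = 1) :
    ∃ (m : ℕ) (c : Fin m → ℝ) (x : Fin m → Fin d₁ → ℂ) (y : Fin m → Fin d₂ → ℂ),
      (∀ α, star (x α) ⬝ᵥ x α = 1) ∧ (∀ α, star (y α) ⬝ᵥ y α = 1) ∧
      (∑ α, c α = 1) ∧
      ρ = ∑ α, c α •
        Matrix.vecMulVec (fun q : Fin d₁ × Fin d₂ => x α q.1 * y α q.2)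
          (star fun q : Fin d₁ × Fin d₂ => x α q.1 * y α q.2) := by
  obtain ⟨m, c, P, hρP⟩ := mem_span_set'.1 <|
    mem_span_real_of_isSelfAdjoint (fun _ => isSelfAdjoint_of_mem_productProjections)
      hρ.isHermitian (span_productProjections_eq_top (m := Fin d₁) (n := Fin d₂) ▸ mem_top)
  choose x y hx hy hP using fun i => (P i).2
  refine ⟨m, c, x, y, hx, hy, ?_, ?_⟩
  · have htr := congrArg trace hρP
    simp only [trace_sum, trace_smul, trace_of_mem_productProjections (P _).2, hτ,
      Complex.real_smul, mul_one] at htr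
    exact_mod_cast htr
  · simp_rw [hP]
    exact hρP.symm

/-- Every density matrix on `ℂ^{d₁} ⊗ ℂ^{d₂}` is a real affine
combination of projections onto unit simple-tensor (product) vectors:
`ρ = Σ_α c_α • (w_α w_αᴴ)` with `w_α = x_α ⊗ y_α` unit simple tensors and
real coefficients `c_α` summing to `1`. -/
theorem density_matrix_affine_combination_of_product_projections
    (d₁ d₂ : ℕ) (hd₁ : 0 < d₁) (hd₂ : 0 < d₂)
    (ρ : Matrix (Fin d₁ × Fin d₂) (Fin d₁ × Fin d₂) ℂ)
    (hρ : ρ.PosSemidef) (hτ : ρ.trace = 1) :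
    ∃ (m : ℕ) (c : Fin m → ℝ) (x : Fin m → Fin d₁ → ℂ) (y : Fin m → Fin d₂ → ℂ),
      (∀ α, star (x α) ⬝ᵥ x α = 1) ∧ (∀ α, star (y α) ⬝ᵥ y α = 1) ∧
      (∑ α, c α = 1) ∧
      ρ = ∑ α, c α •
        Matrix.vecMulVec (fun q : Fin d₁ × Fin d₂ => x α q.1 * y α q.2)
          (star fun q : Fin d₁ × Fin d₂ => x α q.1 * y α q.2) :=
  density_matrix_affine_combination_of_product_projections_general d₁ d₂ ρ hρ hτ
end

section
/- Let d₁, d₂ be positive integers. The rank-one projections onto unit simple-tensor vectors span, over the real numbers, the real vector space of all Hermitian matrices indexed by (Fin d₁ × Fin d₂): every Hermitian matrix M over ℂ indexed by (Fin d₁ × Fin d₂) can be written as a finite real linear combination M = Σ_α c_α • (w_α w_αᴴ), where each w_α = x_α ⊗ y_α is a unit simple-tensor vector (x_α : Fin d₁ → ℂ, y_α : Fin d₂ → ℂ unit vectors, w_α(i,j) = x_α i · y_α j) and c_α ∈ ℝ. -/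
/-!
Every matrix X on `ι × κ` is a complex combination of Kronecker products of matrix units, and a
Hermitian M equals its real part `ℜ M = (M + Mᴴ)/2`, which is real-linear in M. So it suffices to
show `ℜ (A ⊗ₖ B) = ℜ A ⊗ₖ ℜ B - ℑ A ⊗ₖ ℑ B` lies in the real span of the simple-tensor projections.
By the spectral theorem each Hermitian factor is a real combination of projections `v vᴴ` onto
unit vectors, and `x xᴴ ⊗ₖ y yᴴ` is the projection onto `x ⊗ y`.
-/

open scoped Kronecker ComplexStarModule

namespace Matrix

section Spectral

variable {𝕜 n : Type*} [RCLike 𝕜] [Fintype n] [DecidableEq n] {A : Matrix n n 𝕜}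

theorem IsHermitian.star_eigenvectorBasis_dotProduct_self (hA : A.IsHermitian) (i : n) :
    star ⇑(hA.eigenvectorBasis i) ⬝ᵥ ⇑(hA.eigenvectorBasis i) = 1 := by
  rw [dotProduct_comm, ← EuclideanSpace.inner_eq_star_dotProduct, inner_self_eq_norm_sq_to_K,
    hA.eigenvectorBasis.orthonormal.1 i]
  simp

theorem IsHermitian.eq_sum_eigenvalues_smul_vecMulVec (hA : A.IsHermitian) :
    A = ∑ i, hA.eigenvalues i •
      vecMulVec ⇑(hA.eigenvectorBasis i) (star ⇑(hA.eigenvectorBasis i)) := by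
  conv_lhs => rw [hA.spectral_theorem]
  ext a b
  simp [Unitary.conjStarAlgAut_apply, mul_apply, sum_apply, vecMulVec_apply, diagonal_apply,
    eigenvectorUnitary_apply, RCLike.real_smul_eq_coe_mul, mul_comm, mul_assoc, mul_left_comm]

end Spectral

theorem vecMulVec_kronecker_vecMulVec {R l m n p : Type*} [CommSemiring R]
    (a : l → R) (b : m → R) (c : n → R) (d : p → R) :
    vecMulVec a b ⊗ₖ vecMulVec c d =
      vecMulVec (fun q => a q.1 * c q.2) (fun q => b q.1 * d q.2) := by
  ext ⟨i₁, i₂⟩ ⟨j₁, j₂⟩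
  simp only [kronecker_apply, vecMulVec_apply]
  ring

theorem realPart_kronecker {ι κ : Type*} (A : Matrix ι ι ℂ) (B : Matrix κ κ ℂ) :
    (ℜ (A ⊗ₖ B) : Matrix (ι × κ) (ι × κ) ℂ) =
      (ℜ A : Matrix ι ι ℂ) ⊗ₖ (ℜ B : Matrix κ κ ℂ) -
        (ℑ A : Matrix ι ι ℂ) ⊗ₖ (ℑ B : Matrix κ κ ℂ) := by
  ext ⟨i₁, i₂⟩ ⟨j₁, j₂⟩
  simp only [realPart_apply_coe, imaginaryPart_apply_coe, star_eq_conjTranspose, smul_apply,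
    add_apply, sub_apply, neg_apply, kroneckerMap_apply, conjTranspose_apply, star_mul',
    RCLike.star_def, smul_add, Complex.real_smul, Complex.ofReal_inv, Complex.ofReal_ofNat,
    neg_smul, smul_eq_mul, mul_neg, neg_mul, neg_neg]
  ring_nf
  rw [Complex.I_sq]
  ring

section Projections

variable {ι κ : Type*} [Fintype ι] [Fintype κ]

def rankOneProjections (ι : Type*) [Fintype ι] : Set (Matrix ι ι ℂ) :=
  {P | ∃ v : ι → ℂ, star v ⬝ᵥ v = 1 ∧ P = vecMulVec v (star v)}

def simpleTensorProjections (ι κ : Type*) [Fintype ι] [Fintype κ] :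
    Set (Matrix (ι × κ) (ι × κ) ℂ) :=
  {P | ∃ (x : ι → ℂ) (y : κ → ℂ), star x ⬝ᵥ x = 1 ∧ star y ⬝ᵥ y = 1 ∧
    P = vecMulVec (fun q => x q.1 * y q.2) (star fun q => x q.1 * y q.2)}

theorem IsHermitian.mem_span_rankOneProjections [DecidableEq ι] {A : Matrix ι ι ℂ}
    (hA : A.IsHermitian) : A ∈ Submodule.span ℝ (rankOneProjections ι) := by
  rw [hA.eq_sum_eigenvalues_smul_vecMulVec]
  exact Submodule.sum_mem _ fun i _ => Submodule.smul_mem _ _ <|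
    Submodule.subset_span ⟨_, hA.star_eigenvectorBasis_dotProduct_self i, rfl⟩

theorem kronecker_mem_simpleTensorProjections {P : Matrix ι ι ℂ} {Q : Matrix κ κ ℂ}
    (hP : P ∈ rankOneProjections ι) (hQ : Q ∈ rankOneProjections κ) :
    P ⊗ₖ Q ∈ simpleTensorProjections ι κ := by
  obtain ⟨x, hx, rfl⟩ := hP
  obtain ⟨y, hy, rfl⟩ := hQ
  refine ⟨x, y, hx, hy, ?_⟩
  rw [vecMulVec_kronecker_vecMulVec]
  congr 1
  ext q
  exact (star_mul' _ _).symm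

theorem kronecker_mem_span_simpleTensorProjections {A : Matrix ι ι ℂ} {B : Matrix κ κ ℂ}
    (hA : A ∈ Submodule.span ℝ (rankOneProjections ι))
    (hB : B ∈ Submodule.span ℝ (rankOneProjections κ)) :
    A ⊗ₖ B ∈ Submodule.span ℝ (simpleTensorProjections ι κ) := by
  have h := Submodule.apply_mem_map₂ (kroneckerBilinear (R := ℝ)) hA hB
  rw [Submodule.map₂_span_span] at h
  refine Submodule.span_mono ?_ h
  rintro _ ⟨P, hP, Q, hQ, rfl⟩
  exact kronecker_mem_simpleTensorProjections hP hQ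

theorem realPart_kronecker_mem_span_simpleTensorProjections [DecidableEq ι] [DecidableEq κ]
    (A : Matrix ι ι ℂ) (B : Matrix κ κ ℂ) :
    (ℜ (A ⊗ₖ B) : Matrix (ι × κ) (ι × κ) ℂ) ∈
      Submodule.span ℝ (simpleTensorProjections ι κ) := by
  rw [realPart_kronecker]
  exact sub_mem
    (kronecker_mem_span_simpleTensorProjections (IsHermitian.mem_span_rankOneProjections (ℜ A).2)
      (IsHermitian.mem_span_rankOneProjections (ℜ B).2))
    (kronecker_mem_span_simpleTensorProjections (IsHermitian.mem_span_rankOneProjections (ℑ A).2)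
      (IsHermitian.mem_span_rankOneProjections (ℑ B).2))

theorem IsHermitian.mem_span_simpleTensorProjections [DecidableEq ι] [DecidableEq κ]
    {M : Matrix (ι × κ) (ι × κ) ℂ} (hM : M.IsHermitian) :
    M ∈ Submodule.span ℝ (simpleTensorProjections ι κ) := by
  have hsingle (p q : ι × κ) (z : ℂ) : single p q z = single p.1 q.1 z ⊗ₖ single p.2 q.2 1 := by
    rw [single_kronecker_single, mul_one]
  rw [← hM.isSelfAdjoint.coe_realPart, matrix_eq_sum_single M]
  simp only [map_sum, AddSubmonoidClass.coe_finsetSum, hsingle]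
  refine Submodule.sum_mem _ fun p _ => Submodule.sum_mem _ fun q _ => ?_
  exact realPart_kronecker_mem_span_simpleTensorProjections _ _

end Projections

end Matrix

theorem hermitian_spanned_by_product_projections_general (d₁ d₂ : ℕ)
    (M : Matrix (Fin d₁ × Fin d₂) (Fin d₁ × Fin d₂) ℂ) (hM : M.IsHermitian) :
    ∃ (m : ℕ) (c : Fin m → ℝ) (x : Fin m → Fin d₁ → ℂ) (y : Fin m → Fin d₂ → ℂ),
      (∀ α, star (x α) ⬝ᵥ x α = 1) ∧ (∀ α, star (y α) ⬝ᵥ y α = 1) ∧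
      M = ∑ α, c α •
        Matrix.vecMulVec (fun q : Fin d₁ × Fin d₂ => x α q.1 * y α q.2)
          (star fun q : Fin d₁ × Fin d₂ => x α q.1 * y α q.2) := by
  obtain ⟨m, c, P, hP⟩ := Submodule.mem_span_set'.mp hM.mem_span_simpleTensorProjections
  choose x y hx hy hP_eq using fun α => (P α).2
  refine ⟨m, c, x, y, hx, hy, ?_⟩
  rw [← hP]
  exact Finset.sum_congr rfl fun α _ => by rw [hP_eq α]

/-- The rank-one projections onto unit simple-tensor vectors span
the real vector space of Hermitian matrices on `ℂ^{d₁} ⊗ ℂ^{d₂}`: every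
Hermitian matrix `M` is a finite real linear combination
`M = Σ_α c_α • (w_α w_αᴴ)` with `w_α = x_α ⊗ y_α` unit simple-tensor vectors. -/
theorem hermitian_spanned_by_product_projections (d₁ d₂ : ℕ) (hd₁ : 0 < d₁) (hd₂ : 0 < d₂)
    (M : Matrix (Fin d₁ × Fin d₂) (Fin d₁ × Fin d₂) ℂ) (hM : M.IsHermitian) :
    ∃ (m : ℕ) (c : Fin m → ℝ) (x : Fin m → Fin d₁ → ℂ) (y : Fin m → Fin d₂ → ℂ),
      (∀ α, star (x α) ⬝ᵥ x α = 1) ∧ (∀ α, star (y α) ⬝ᵥ y α = 1) ∧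
      M = ∑ α, c α •
        Matrix.vecMulVec (fun q : Fin d₁ × Fin d₂ => x α q.1 * y α q.2)
          (star fun q : Fin d₁ × Fin d₂ => x α q.1 * y α q.2) :=
  hermitian_spanned_by_product_projections_general d₁ d₂ M hM
end
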